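/- Let f : ℝ^d → [0,∞] be convex with f(0) = 0 and f(x) ≥ ‖x‖²/2 for all x. Then for every t > 0 and all x, f*(x) ≤ (f + t·h)*(x) + 4t·h(x), where h(x) = ‖x‖²/2 and f* is the Legendre–Fenchel transform. -/

import Mathlib

open scoped RealInnerProductSpace ENNReal NNReal

noncomputable section

/-- The Legendre–Fenchel transform of an `[0,∞]`-valued function:
`f*(x) = sup_y (⟨x,y⟩ − f(y))` (the supremum is non-negative since `f ≥ 0`, `f(0)=0`). -/
def legE {d : ℕ} (f : EuclideanSpace ℝ (Fin d) → ℝ≥0∞) (x : EuclideanSpace ℝ (Fin d)) :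
    ℝ≥0∞ :=
  ⨆ y, ENNReal.ofReal ⟪x, y⟫ - f y

/-- Convexity for `[0,∞]`-valued functions. -/
def ConvexE {d : ℕ} (f : EuclideanSpace ℝ (Fin d) → ℝ≥0∞) : Prop :=
  ∀ x y : EuclideanSpace ℝ (Fin d), ∀ a b : ℝ≥0, a + b = 1 →
    f ((a : ℝ) • x + (b : ℝ) • y) ≤ a * f x + b * f y

/-- The self-polar function `h(x) = ‖x‖²/2` as an `[0,∞]`-valued function. -/
def hE {d : ℕ} (x : EuclideanSpace ℝ (Fin d)) : ℝ≥0∞ := ENNReal.ofReal (‖x‖ ^ 2 / 2)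

/-! If `⟪x, y⟫ > f y ≥ ‖y‖²/2` then `‖y‖ ≤ 2‖x‖` by Cauchy–Schwarz, so the perturbation
`t h(y)` costs at most `4 t h(x)`; for the remaining `y` the term of `f*(x)` vanishes. -/

theorem norm_sq_le_four_mul_norm_sq_of_le_inner {E : Type*} [NormedAddCommGroup E]
    [InnerProductSpace ℝ E] {x y : E} (h : ‖y‖ ^ 2 / 2 ≤ ⟪x, y⟫) :
    ‖y‖ ^ 2 / 2 ≤ 4 * (‖x‖ ^ 2 / 2) := by
  nlinarith [real_inner_le_norm x y, norm_nonneg x, norm_nonneg y, sq_nonneg (‖y‖ - 2 * ‖x‖)]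

theorem hE_le_four_mul_hE_of_lt_inner {d : ℕ} {x y : EuclideanSpace ℝ (Fin d)}
    (h : hE y < ENNReal.ofReal ⟪x, y⟫) : hE y ≤ 4 * hE x := by
  have hinner : ‖y‖ ^ 2 / 2 ≤ ⟪x, y⟫ := (ENNReal.ofReal_lt_ofReal_iff'.1 h).1.le
  rw [hE, hE, ← ENNReal.ofReal_ofNat 4, ← ENNReal.ofReal_mul (by norm_num)]
  exact ENNReal.ofReal_le_ofReal (norm_sq_le_four_mul_norm_sq_of_le_inner hinner)

theorem tsub_le_tsub_add_add {α : Type*} [PartialOrder α] [AddCommSemigroup α] [Sub α]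
    [OrderedSub α] (a b c : α) : a - b ≤ a - (b + c) + c := by
  rw [← tsub_tsub]
  exact le_tsub_add

theorem legendre_perturbation_bound_general {d : ℕ}
    (f : EuclideanSpace ℝ (Fin d) → ℝ≥0∞)
    (hlb : ∀ x, hE x ≤ f x) (t : ℝ) :
    ∀ x, legE f x ≤ legE (fun y => f y + ENNReal.ofReal t * hE y) x
        + 4 * ENNReal.ofReal t * hE x := by
  intro x
  refine iSup_le fun y => ?_
  rcases le_or_gt (ENNReal.ofReal ⟪x, y⟫) (f y) with hle | hlt
  · rw [tsub_eq_zero_of_le hle]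
    exact zero_le
  have hy : hE y ≤ 4 * hE x := hE_le_four_mul_hE_of_lt_inner ((hlb y).trans_lt hlt)
  calc ENNReal.ofReal ⟪x, y⟫ - f y
      ≤ ENNReal.ofReal ⟪x, y⟫ - (f y + ENNReal.ofReal t * hE y) + ENNReal.ofReal t * hE y :=
        tsub_le_tsub_add_add _ _ _
    _ ≤ legE (fun y => f y + ENNReal.ofReal t * hE y) x + ENNReal.ofReal t * (4 * hE x) := by
        gcongr
        exact le_iSup (fun z => ENNReal.ofReal ⟪x, z⟫ - (f z + ENNReal.ofReal t * hE z)) y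
    _ = legE (fun y => f y + ENNReal.ofReal t * hE y) x + 4 * ENNReal.ofReal t * hE x := by
        ring

/-- If `f : ℝ^d → [0,∞]` is convex with `f(0)=0` and `f ≥ h` where `h(x)=‖x‖²/2`, then for
every `t > 0` and all `x`, `f*(x) ≤ (f + t h)*(x) + 4 t h(x)`. -/
theorem legendre_perturbation_bound {d : ℕ}
    (f : EuclideanSpace ℝ (Fin d) → ℝ≥0∞) (hconv : ConvexE f) (hf0 : f 0 = 0)
    (hlb : ∀ x, hE x ≤ f x) (t : ℝ) (ht : 0 < t) :
    ∀ x, legE f x ≤ legE (fun y => f y + ENNReal.ofReal t * hE y) x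
        + 4 * ENNReal.ofReal t * hE x :=
  legendre_perturbation_bound_general f hlb t
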